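/- arXiv:1710.09857 — 5 statements merged into one kernel-verified Lean document; each statement's English description precedes it below -/
import Mathlib

section
/- Suppose the matrix I − (P − W) is invertible, where P is row-stochastic with stationary distribution w and W has all rows equal to wᵀ. Then the matrix G = ((I − (P − W))⁻¹ − W)·D, where D = diag(1/w_i), satisfies (I − P)G = (I − W)D and WG = 0. -/
/-!
Since `P` has unit row sums and `w` is stationary, the rank-one matrix `W` satisfies
`P W = W P = W² = W`. Hence `W A = W` for `A = I − (P − W)`, so `W A⁻¹ = W` and
`(I − P) A⁻¹ = (A − W) A⁻¹ = I − W`; with `(I − P) W = 0` both identities follow.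
-/

open Matrix BigOperators

theorem Matrix.mul_replicateRow_of_sum_eq_one {l m n α : Type*} [Fintype n] [NonAssocSemiring α]
    {P : Matrix m n α} (hP : ∀ i, ∑ j, P i j = 1) (w : l → α) :
    P * replicateRow n w = replicateRow m w := by
  ext i j
  simp only [mul_apply, replicateRow_apply, ← Finset.sum_mul, hP, one_mul]

theorem Matrix.replicateRow_mul_of_vecMul_eq {m n α : Type*} [Fintype n]
    [NonUnitalNonAssocSemiring α] {P : Matrix n n α} {w : n → α} (hw : w ᵥ* P = w) :
    replicateRow m w * P = replicateRow m w := by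
  rw [← replicateRow_vecMul, hw]

section Ring

variable {α : Type*} [Ring α] {P W Z : α}

theorem mul_eq_self_of_one_sub_sub_mul_eq_one (hWP : W * P = W) (hWW : W * W = W)
    (hZ : (1 - (P - W)) * Z = 1) : W * Z = W :=
  calc W * Z = W * (1 - (P - W)) * Z := by
        rw [mul_sub, mul_sub, mul_one, hWP, hWW, sub_self, sub_zero]
    _ = W := by rw [mul_assoc, hZ, mul_one]

theorem one_sub_mul_eq_of_one_sub_sub_mul_eq_one (hWP : W * P = W) (hWW : W * W = W)
    (hZ : (1 - (P - W)) * Z = 1) : (1 - P) * Z = 1 - W :=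
  calc (1 - P) * Z = (1 - (P - W)) * Z - W * Z := by
        rw [← sub_mul]; congr 1; abel
    _ = 1 - W := by rw [hZ, mul_eq_self_of_one_sub_sub_mul_eq_one hWP hWW hZ]

theorem greens_identities (hPW : P * W = W) (hWP : W * P = W) (hWW : W * W = W)
    (hZ : (1 - (P - W)) * Z = 1) (D : α) :
    (1 - P) * ((Z - W) * D) = (1 - W) * D ∧ W * ((Z - W) * D) = 0 := by
  have hWZ := mul_eq_self_of_one_sub_sub_mul_eq_one hWP hWW hZ
  have hPZ := one_sub_mul_eq_of_one_sub_sub_mul_eq_one hWP hWW hZ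
  constructor
  · rw [← mul_assoc, mul_sub, hPZ, sub_mul 1 P W, one_mul, hPW, sub_self, sub_zero]
  · rw [← mul_assoc, mul_sub, hWZ, hWW, sub_self, zero_mul]

end Ring

theorem greens_function_properties_general {n : ℕ}
    (P W D G : Matrix (Fin n) (Fin n) ℝ) (w : Fin n → ℝ)
    (hP_row : ∀ i, ∑ j, P i j = 1)
    (hw_sum : ∑ i, w i = 1)
    (hw_stat : ∀ j, ∑ i, w i * P i j = w j)
    (hW : ∀ i j, W i j = w j)
    (hinv : IsUnit (1 - (P - W)).det)
    (hG : G = ((1 - (P - W))⁻¹ - W) * D) :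
    (1 - P) * G = (1 - W) * D ∧ W * G = 0 := by
  obtain rfl : W = replicateRow (Fin n) w := Matrix.ext hW
  subst hG
  refine greens_identities ?_ ?_ ?_ (mul_nonsing_inv _ hinv) D
  · exact mul_replicateRow_of_sum_eq_one hP_row w
  · exact replicateRow_mul_of_vecMul_eq (funext hw_stat)
  · exact mul_replicateRow_of_sum_eq_one (fun _ => hw_sum) w

/-- If `I − (P − W)` is invertible, then `G = ((I − (P − W))⁻¹ − W)·D`, with
`D = diag(1/w_i)`, satisfies `(I − P)G = (I − W)D` and `WG = 0`. -/
theorem greens_function_properties {n : ℕ}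
    (P W D G : Matrix (Fin n) (Fin n) ℝ) (w : Fin n → ℝ)
    (hP_nonneg : ∀ i j, 0 ≤ P i j)
    (hP_row : ∀ i, ∑ j, P i j = 1)
    (hw_pos : ∀ i, 0 < w i)
    (hw_sum : ∑ i, w i = 1)
    (hw_stat : ∀ j, ∑ i, w i * P i j = w j)
    (hW : ∀ i j, W i j = w j)
    (hD : D = Matrix.diagonal (fun i => 1 / w i))
    (hinv : IsUnit (1 - (P - W)).det)
    (hG : G = ((1 - (P - W))⁻¹ - W) * D) :
    (1 - P) * G = (1 - W) * D ∧ W * G = 0 :=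
  greens_function_properties_general P W D G w hP_row hw_sum hw_stat hW hinv hG
end

section
/- Under the hypotheses that I − (P − W) is invertible, the Green's function G is the unique matrix satisfying (I − P)G = (I − W)D and WG = 0. -/
open Matrix BigOperators

namespace Matrix

variable {l m n R : Type*} [Fintype m]

theorem mulVec_col_eq_zero_of_mul_eq_zero [NonUnitalNonAssocSemiring R]
    {A : Matrix l m R} {H : Matrix m n R} (h : A * H = 0) (j : n) :
    A *ᵥ (fun k => H k j) = 0 :=
  funext fun i => congrFun (congrFun h i) j

theorem mul_apply_eq_of_col_const [NonAssocSemiring R] {W : Matrix l m R} {H : Matrix m n R}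
    {w : m → R} (hW : ∀ i k, W i k = w k) (hw : ∑ k, w k = 1) {j : n} {c : R}
    (hH : ∀ k, H k j = c) (i : l) : (W * H) i j = c := by
  simp only [mul_apply, hW, hH, ← Finset.sum_mul, hw, one_mul]

end Matrix

theorem greens_function_unique_general {n : ℕ}
    (P W D G₁ G₂ : Matrix (Fin n) (Fin n) ℝ) (w : Fin n → ℝ)
    (hw_sum : ∑ i, w i = 1)
    (hW : ∀ i j, W i j = w j)
    (hnull : ∀ v : Fin n → ℝ, (1 - P).mulVec v = 0 → ∃ c : ℝ, v = fun _ => c)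
    (h₁ : (1 - P) * G₁ = (1 - W) * D ∧ W * G₁ = 0)
    (h₂ : (1 - P) * G₂ = (1 - W) * D ∧ W * G₂ = 0) :
    G₁ = G₂ := by
  have hP : (1 - P) * (G₁ - G₂) = 0 := by rw [Matrix.mul_sub, h₁.1, h₂.1, sub_self]
  have hW0 : W * (G₁ - G₂) = 0 := by rw [Matrix.mul_sub, h₁.2, h₂.2, sub_self]
  ext i j
  -- Column `j` of `G₁ - G₂` lies in the kernel of `1 - P`, hence is constant, and
  -- averaging it against `w` returns that constant, which `W (G₁ - G₂) = 0` forces to be `0`.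
  obtain ⟨c, hc⟩ := hnull _ (mulVec_col_eq_zero_of_mul_eq_zero hP j)
  have hcol : ∀ k, (G₁ - G₂) k j = c := fun k => congrFun hc k
  have hc0 : c = 0 := by
    rw [← mul_apply_eq_of_col_const hW hw_sum hcol i, hW0, Matrix.zero_apply]
  simpa [hc0, sub_eq_zero] using hcol i

/-- The Green's function is the unique matrix satisfying `(I − P)G = (I − W)D` and
`WG = 0`: any two matrices satisfying both equations are equal, given that the null
space of `I − P` is spanned by the all-ones vector `𝟏`. -/
theorem greens_function_unique {n : ℕ}
    (P W D G₁ G₂ : Matrix (Fin n) (Fin n) ℝ) (w : Fin n → ℝ)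
    (hP_nonneg : ∀ i j, 0 ≤ P i j)
    (hP_row : ∀ i, ∑ j, P i j = 1)
    (hw_pos : ∀ i, 0 < w i)
    (hw_sum : ∑ i, w i = 1)
    (hw_stat : ∀ j, ∑ i, w i * P i j = w j)
    (hW : ∀ i j, W i j = w j)
    (hD : D = Matrix.diagonal (fun i => 1 / w i))
    (hnull : ∀ v : Fin n → ℝ, (1 - P).mulVec v = 0 → ∃ c : ℝ, v = fun _ => c)
    (h₁ : (1 - P) * G₁ = (1 - W) * D ∧ W * G₁ = 0)
    (h₂ : (1 - P) * G₂ = (1 - W) * D ∧ W * G₂ = 0) :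
    G₁ = G₂ :=
  greens_function_unique_general P W D G₁ G₂ w hw_sum hW hnull h₁ h₂
end

section
/- If G is the Green's function (satisfying (I − P)G = (I − W)D and WG = 0) and M is defined by m_{ij} = G_{jj} − G_{ij}, then M has zero diagonal and satisfies (I − P)M = J − D, where J is the all-ones matrix. -/
open Matrix

/-!
Every row of `M + G` is the diagonal of `G`, and `I - P` annihilates a matrix with identical
rows because the rows of `P` sum to one. Hence `(I - P)M = -(I - P)G = WD - D`, and `WD = J`
because every row of `W` is `w`.
-/

namespace Matrix

variable {ι R : Type*} [Fintype ι] [DecidableEq ι]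

theorem one_sub_mul_replicateRow_eq_zero [Ring R] {P : Matrix ι ι R}
    (hP : ∀ i, ∑ j, P i j = 1) (v : ι → R) : (1 - P) * replicateRow ι v = 0 := by
  rw [sub_mul, one_mul, sub_eq_zero]
  ext i j
  simp only [mul_apply, replicateRow_apply, ← Finset.sum_mul, hP, one_mul]

theorem replicateRow_mul_diagonal_one_div [DivisionRing R] {w : ι → R} (hw : ∀ j, w j ≠ 0) :
    replicateRow ι w * diagonal (fun j => 1 / w j) = of fun _ _ => 1 := by
  ext i j
  simp only [mul_diagonal, replicateRow_apply, of_apply, mul_one_div_cancel (hw j)]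

end Matrix

theorem hitting_times_from_greens_function_general {n : ℕ}
    (P W D G M : Matrix (Fin n) (Fin n) ℝ) (w : Fin n → ℝ)
    (hP_row : ∀ i, ∑ j, P i j = 1)
    (hw_pos : ∀ i, 0 < w i)
    (hW : ∀ i j, W i j = w j)
    (hD : D = Matrix.diagonal (fun j => 1 / w j))
    (hG₁ : (1 - P) * G = (1 - W) * D)
    (hM : ∀ i j, M i j = G j j - G i j) :
    (∀ j, M j j = 0) ∧
      (1 - P) * M = (Matrix.of fun _ _ => (1 : ℝ)) - D := by
  have hW' : W = replicateRow (Fin n) w := ext hW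
  have hM' : M = replicateRow (Fin n) G.diag - G := ext hM
  refine ⟨fun j => by rw [hM, sub_self], ?_⟩
  rw [hM', mul_sub, one_sub_mul_replicateRow_eq_zero hP_row, hG₁, hW', sub_mul, one_mul,
    hD, replicateRow_mul_diagonal_one_div fun j => (hw_pos j).ne']
  abel

/-- If `G` is the Green's function (satisfying `(I − P)G = (I − W)D` and `WG = 0`) and
`M` is defined by `m_{ij} = G_{jj} − G_{ij}`, then `M` has zero diagonal and satisfies
`(I − P)M = J − D`, where `J` is the all-ones matrix. -/
theorem hitting_times_from_greens_function {n : ℕ}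
    (P W D G M : Matrix (Fin n) (Fin n) ℝ) (w : Fin n → ℝ)
    (hP_nonneg : ∀ i j, 0 ≤ P i j)
    (hP_row : ∀ i, ∑ j, P i j = 1)
    (hw_pos : ∀ i, 0 < w i)
    (hw_sum : ∑ i, w i = 1)
    (hw_stat : ∀ j, ∑ i, w i * P i j = w j)
    (hW : ∀ i j, W i j = w j)
    (hD : D = Matrix.diagonal (fun j => 1 / w j))
    (hG₁ : (1 - P) * G = (1 - W) * D)
    (hG₂ : W * G = 0)
    (hM : ∀ i j, M i j = G j j - G i j) :
    (∀ j, M j j = 0) ∧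
      (1 - P) * M = (Matrix.of fun _ _ => (1 : ℝ)) - D :=
  hitting_times_from_greens_function_general P W D G M w hP_row hw_pos hW hD hG₁ hM
end

section
/- If m_{ij} = G_{jj} − G_{ij} where G is the Green's function normalized by WG = 0, then the quantity K_i = ∑_j m_{ij} w_j equals ∑_j G_{jj} w_j − (GD⁻¹)_{i·}·𝟏; in particular, using Z = G·D⁻¹ with row sums zero, K_i = trace(Z) for every i, so K_i is independent of i (Kemeny's constant). -/
open Matrix BigOperators

/-!
Since `P` and `W` both have row sums one, `1 - (P - W)` fixes the all-ones vector, hence so does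
its inverse, and `Z = (1 - (P - W))⁻¹ - W` has row sums zero. As `w_j G_{ij} = Z_{ij}`,
`K_i = ∑_j Z_{jj} - ∑_j Z_{ij} = trace Z`.
-/

namespace Matrix

variable {ι : Type*} [Fintype ι]

theorem mulVec_one_apply {R : Type*} [NonAssocSemiring R]
    (A : Matrix ι ι R) (i : ι) : (A *ᵥ 1) i = ∑ j, A i j := by
  simp [mulVec, dotProduct]

variable [DecidableEq ι]

theorem inv_mulVec_eq_self {R : Type*} [CommRing R] {A : Matrix ι ι R} {v : ι → R}
    (hA : IsUnit A.det) (h : A *ᵥ v = v) : A⁻¹ *ᵥ v = v := by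
  conv_lhs => rw [← h]
  rw [mulVec_mulVec, nonsing_inv_mul A hA, one_mulVec]

theorem inv_one_sub_sub_sub_mulVec_one {R : Type*} [CommRing R] {P W : Matrix ι ι R}
    (hP : P *ᵥ 1 = 1) (hW : W *ᵥ 1 = 1) (hinv : IsUnit (1 - (P - W)).det) :
    ((1 - (P - W))⁻¹ - W) *ᵥ 1 = 0 := by
  have hfix : (1 - (P - W)) *ᵥ 1 = 1 := by
    rw [sub_mulVec, sub_mulVec, one_mulVec, hP, hW, sub_self, sub_zero]
  rw [sub_mulVec, inv_mulVec_eq_self hinv hfix, hW, sub_self]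

theorem sum_mul_diag_sub_mul_diagonal_inv_eq_trace {K : Type*} [Field K] {Z : Matrix ι ι K}
    {w : ι → K} (hw : ∀ j, w j ≠ 0) (hZ : Z *ᵥ 1 = 0) (i : ι) :
    ∑ j, w j * ((Z * diagonal fun j => 1 / w j) j j - (Z * diagonal fun j => 1 / w j) i j) =
      trace Z := by
  have hrow : ∑ j, Z i j = 0 := by rw [← mulVec_one_apply, hZ, Pi.zero_apply]
  have hterm : ∀ j, w j * ((Z * diagonal fun j => 1 / w j) j j -
      (Z * diagonal fun j => 1 / w j) i j) = Z j j - Z i j := by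
    intro j
    simp only [mul_diagonal]
    field_simp [hw j]
  simp only [hterm, Finset.sum_sub_distrib, hrow, sub_zero, trace, diag]

end Matrix

theorem kemeny_constant_is_trace_general {n : ℕ}
    (P W Z G : Matrix (Fin n) (Fin n) ℝ) (w : Fin n → ℝ)
    (hP_row : ∀ i, ∑ j, P i j = 1)
    (hw_pos : ∀ i, 0 < w i)
    (hw_sum : ∑ i, w i = 1)
    (hW : ∀ i j, W i j = w j)
    (hinv : IsUnit (1 - (P - W)).det)
    (hZ : Z = (1 - (P - W))⁻¹ - W)
    (hG : G = Z * Matrix.diagonal (fun j => 1 / w j)) :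
    ∀ i : Fin n, (∑ j, w j * (G j j - G i j)) = Matrix.trace Z := by
  have hP : P *ᵥ 1 = 1 := funext fun i => by rw [mulVec_one_apply, hP_row, Pi.one_apply]
  have hW1 : W *ᵥ 1 = 1 := funext fun i => by
    simp only [mulVec_one_apply, hW, hw_sum, Pi.one_apply]
  have hZ1 : Z *ᵥ 1 = 0 := hZ ▸ inv_one_sub_sub_sub_mulVec_one hP hW1 hinv
  subst hG
  exact sum_mul_diag_sub_mul_diagonal_inv_eq_trace (fun j => (hw_pos j).ne') hZ1

/-- With `m_{ij} = G_{jj} − G_{ij}` for the Green's function `G = ((I−(P−W))⁻¹ − W)D`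
normalized by `WG = 0`, the quantity `K_i = ∑_j w_j m_{ij}` equals `trace(Z)` for
`Z = (I−(P−W))⁻¹ − W` and every `i`; in particular `K_i` is independent of `i`
(Kemeny's constant). -/
theorem kemeny_constant_is_trace {n : ℕ}
    (P W Z G : Matrix (Fin n) (Fin n) ℝ) (w : Fin n → ℝ)
    (hP_nonneg : ∀ i j, 0 ≤ P i j)
    (hP_row : ∀ i, ∑ j, P i j = 1)
    (hw_pos : ∀ i, 0 < w i)
    (hw_sum : ∑ i, w i = 1)
    (hw_stat : ∀ j, ∑ i, w i * P i j = w j)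
    (hW : ∀ i j, W i j = w j)
    (hinv : IsUnit (1 - (P - W)).det)
    (hZ : Z = (1 - (P - W))⁻¹ - W)
    (hG : G = Z * Matrix.diagonal (fun j => 1 / w j)) :
    ∀ i : Fin n, (∑ j, w j * (G j j - G i j)) = Matrix.trace Z :=
  kemeny_constant_is_trace_general P W Z G w hP_row hw_pos hw_sum hW hinv hZ hG
end

section
/- Kemeny's constant K = trace(Z), where Z = (I − (P − W))⁻¹ − W, equals ∑_{j=1}^{n−1} 1/(1 − ν_j), where 1, ν_1, …, ν_{n−1} are the eigenvalues of P counted with multiplicity, assuming P is diagonalizable with all ν_j ≠ 1. -/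
/-! In the eigenbasis given by `S`, the all-ones vector and `w` become right and left eigenvectors
of `diagonal ν` for the simple eigenvalue `1`, so they are supported at `j₀`; as `w ⬝ᵥ 𝟙 = 1`, the
rank-one matrix `W = 𝟙 wᵀ` becomes the diagonal matrix with a single `1` at `j₀`. Hence
`I - (P - W)` is similar to `diagonal (1 - ν + Pi.single j₀ 1)`, whose inverse has trace
`1 + ∑_{j ≠ j₀} 1 / (1 - ν j)`, while `trace W = 1`. -/

open Matrix BigOperators

namespace Matrix

section Domain

variable {ι R : Type*} [Fintype ι] [DecidableEq ι] [CommRing R] [IsDomain R]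

theorem apply_eq_zero_of_diagonal_mulVec_eq_self {ν u : ι → R} (h : diagonal ν *ᵥ u = u)
    {i : ι} (hi : ν i ≠ 1) : u i = 0 := by
  by_contra hu
  exact hi <| (mul_eq_right₀ hu).mp <| by simpa only [mulVec_diagonal] using congrFun h i

theorem apply_eq_zero_of_vecMul_diagonal_eq_self {ν v : ι → R} (h : v ᵥ* diagonal ν = v)
    {i : ι} (hi : ν i ≠ 1) : v i = 0 := by
  by_contra hv
  exact hi <| (mul_eq_left₀ hv).mp <| by simpa only [vecMul_diagonal] using congrFun h i

theorem vecMulVec_eq_diagonal_single {ν u v : ι → R} {j₀ : ι} (hν : ∀ j, j ≠ j₀ → ν j ≠ 1)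
    (hu : diagonal ν *ᵥ u = u) (hv : v ᵥ* diagonal ν = v) (huv : v ⬝ᵥ u = 1) :
    vecMulVec u v = diagonal (Pi.single j₀ 1) := by
  have hu₀ : ∀ i, i ≠ j₀ → u i = 0 := fun i hi =>
    apply_eq_zero_of_diagonal_mulVec_eq_self hu (hν i hi)
  have hv₀ : ∀ j, j ≠ j₀ → v j = 0 := fun j hj =>
    apply_eq_zero_of_vecMul_diagonal_eq_self hv (hν j hj)
  have huv₀ : u j₀ * v j₀ = 1 := by
    rw [← huv, dotProduct, Fintype.sum_eq_single j₀ fun j hj => by rw [hv₀ j hj, zero_mul],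
      mul_comm]
  ext i j
  rw [vecMulVec_apply, diagonal_apply]
  by_cases hi : i = j₀
  · subst hi
    by_cases hj : j = i
    · simp [hj, huv₀]
    · simp [hv₀ j hj, Ne.symm hj]
  · simp [hu₀ i hi, hi]

theorem vecMulVec_eq_conj_diagonal_single {P S : Matrix ι ι R} (hS : IsUnit S.det)
    {ν x y : ι → R} (hP : P = S * diagonal ν * S⁻¹) {j₀ : ι} (hν : ∀ j, j ≠ j₀ → ν j ≠ 1)
    (hx : P *ᵥ x = x) (hy : y ᵥ* P = y) (hxy : y ⬝ᵥ x = 1) :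
    vecMulVec x y = S * diagonal (Pi.single j₀ 1) * S⁻¹ := by
  have hu : diagonal ν *ᵥ (S⁻¹ *ᵥ x) = S⁻¹ *ᵥ x := by
    conv_rhs => rw [← hx, hP]
    simp only [mulVec_mulVec, ← mul_assoc, nonsing_inv_mul _ hS, one_mul]
  have hv : (y ᵥ* S) ᵥ* diagonal ν = y ᵥ* S := by
    conv_rhs => rw [← hy, hP]
    simp only [vecMul_vecMul, mul_assoc, nonsing_inv_mul _ hS, mul_one]
  have huv : (y ᵥ* S) ⬝ᵥ (S⁻¹ *ᵥ x) = 1 := by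
    rw [← dotProduct_mulVec, mulVec_mulVec, mul_nonsing_inv _ hS, one_mulVec, hxy]
  rw [← vecMulVec_eq_diagonal_single hν hu hv huv, ← mul_vecMulVec, ← vecMulVec_mul,
    mul_nonsing_inv_cancel_left _ _ hS, mul_nonsing_inv_cancel_right _ _ hS]

end Domain

theorem trace_inv_conj_diagonal {ι K : Type*} [Fintype ι] [DecidableEq ι] [Field K]
    {S : Matrix ι ι K} (hS : IsUnit S.det) {e : ι → K} (he : ∀ j, e j ≠ 0) :
    trace (S * diagonal e * S⁻¹)⁻¹ = ∑ j, (e j)⁻¹ := by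
  have hinv : (S * diagonal e * S⁻¹)⁻¹ = S * diagonal e⁻¹ * S⁻¹ := by
    refine inv_eq_right_inv ?_
    have hdiag : diagonal e * diagonal e⁻¹ = 1 := by
      rw [diagonal_mul_diagonal, ← diagonal_one]
      exact congrArg diagonal (funext fun j => mul_inv_cancel₀ (he j))
    simp only [mul_assoc, nonsing_inv_mul_cancel_left _ _ hS]
    rw [← mul_assoc (diagonal e), hdiag, one_mul, mul_nonsing_inv _ hS]
  rw [hinv, trace_conj ((isUnit_iff_isUnit_det S).mpr hS), trace_diagonal, Pi.inv_def]

end Matrix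

theorem kemeny_constant_spectral_general {n : ℕ}
    (P W S : Matrix (Fin n) (Fin n) ℝ) (w ν : Fin n → ℝ) (j₀ : Fin n)
    (hP_row : ∀ i, ∑ j, P i j = 1)
    (hw_sum : ∑ i, w i = 1)
    (hw_stat : ∀ j, ∑ i, w i * P i j = w j)
    (hW : ∀ i j, W i j = w j)
    (hS : IsUnit S.det)
    (hdiagonalizable : P = S * Matrix.diagonal ν * S⁻¹)
    (hν₀ : ν j₀ = 1)
    (hν : ∀ j, j ≠ j₀ → ν j ≠ 1) :
    Matrix.trace ((1 - (P - W))⁻¹ - W) =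
      ∑ j ∈ Finset.univ.erase j₀, 1 / (1 - ν j) := by
  have hW_eq : W = vecMulVec 1 w := by
    ext i j
    rw [hW, vecMulVec_apply, Pi.one_apply, one_mul]
  have hP_one : P *ᵥ 1 = 1 := funext fun i => by simp [mulVec, dotProduct, hP_row]
  have hW_proj : W = S * diagonal (Pi.single j₀ 1) * S⁻¹ := by
    rw [hW_eq]
    exact vecMulVec_eq_conj_diagonal_single hS hdiagonalizable hν hP_one (funext hw_stat)
      (by rw [dotProduct_one, hw_sum])
  have hfund : 1 - (P - W) = S * diagonal (1 - ν + Pi.single j₀ 1) * S⁻¹ := by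
    rw [hdiagonalizable, hW_proj, Pi.add_def, ← diagonal_add, Pi.sub_def, ← diagonal_sub,
      Pi.one_def, diagonal_one]
    simp only [mul_add, mul_sub, add_mul, sub_mul, mul_one, mul_nonsing_inv _ hS]
    abel
  have he : ∀ j, (1 - ν + Pi.single j₀ 1 : Fin n → ℝ) j ≠ 0 := by
    intro j
    by_cases hj : j = j₀
    · simp [hj, hν₀]
    · simpa [hj, sub_eq_zero] using (hν j hj).symm
  have he_erase : ∀ j ∈ Finset.univ.erase j₀, ((1 - ν + Pi.single j₀ 1 : Fin n → ℝ) j)⁻¹ =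
      1 / (1 - ν j) := fun j hj => by simp [Finset.ne_of_mem_erase hj]
  rw [trace_sub, hfund, trace_inv_conj_diagonal hS he, hW_eq, trace_vecMulVec, one_dotProduct,
    hw_sum, ← Finset.add_sum_erase _ _ (Finset.mem_univ j₀), Finset.sum_congr rfl he_erase]
  simp [hν₀]

/-- Kemeny's constant `K = trace(Z)`, where `Z = (I − (P − W))⁻¹ − W`, equals
`∑_{j≠j₀} 1/(1 − ν_j)`, where `1 = ν_{j₀}` together with the `ν_j` (`j ≠ j₀`) are the
eigenvalues of `P` counted with multiplicity, assuming `P` is diagonalizable and all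
eigenvalues other than the simple eigenvalue `1` are different from `1`. -/
theorem kemeny_constant_spectral {n : ℕ}
    (P W S : Matrix (Fin n) (Fin n) ℝ) (w ν : Fin n → ℝ) (j₀ : Fin n)
    (hP_nonneg : ∀ i j, 0 ≤ P i j)
    (hP_row : ∀ i, ∑ j, P i j = 1)
    (hw_pos : ∀ i, 0 < w i)
    (hw_sum : ∑ i, w i = 1)
    (hw_stat : ∀ j, ∑ i, w i * P i j = w j)
    (hW : ∀ i j, W i j = w j)
    (hS : IsUnit S.det)
    (hdiagonalizable : P = S * Matrix.diagonal ν * S⁻¹)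
    (hν₀ : ν j₀ = 1)
    (hν : ∀ j, j ≠ j₀ → ν j ≠ 1) :
    Matrix.trace ((1 - (P - W))⁻¹ - W) =
      ∑ j ∈ Finset.univ.erase j₀, 1 / (1 - ν j) :=
  kemeny_constant_spectral_general P W S w ν j₀ hP_row hw_sum hw_stat hW hS hdiagonalizable hν₀ hν
end
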